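/- arXiv:2504.12116 — 2 statements merged into one kernel-verified Lean document; each statement's English description precedes it below -/
import Mathlib

section
/- Let q be a prime power, n a positive integer with gcd(n,q)=1, and m = ord_n(q). Let 0 < t < q^m - 1 and let μ be a common divisor of t and q^m - 1. Then t is the smallest element of its q-cyclotomic coset modulo q^m - 1 if and only if t/μ is the smallest element of its q-cyclotomic coset modulo (q^m - 1)/μ. -/
/-- The coset leader (smallest element) of the `q`-cyclotomic coset of `i` modulo `N`. -/
noncomputable def cosetLeader (q N i : ℕ) : ℕ := sInf {x | ∃ j : ℕ, x = i * q ^ j % N}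

lemma cosetLeader_mul (q N i μ : ℕ) (_hμ : 0 < μ) :
    cosetLeader q (μ * N) (μ * i) = μ * cosetLeader q N i := by
  unfold cosetLeader
  have hS : {x | ∃ j : ℕ, x = μ * i * q ^ j % (μ * N)}
      = (fun y => μ * y) '' {x | ∃ j : ℕ, x = i * q ^ j % N} := by
    ext x
    constructor
    · rintro ⟨j, rfl⟩
      exact ⟨i * q ^ j % N, ⟨j, rfl⟩, by rw [mul_assoc, Nat.mul_mod_mul_left]⟩
    · rintro ⟨y, ⟨j, rfl⟩, rfl⟩
      exact ⟨j, by rw [mul_assoc, Nat.mul_mod_mul_left]⟩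
  rw [hS]
  have hne : {x | ∃ j : ℕ, x = i * q ^ j % N}.Nonempty := ⟨i * q ^ 0 % N, 0, rfl⟩
  have hmem := Nat.sInf_mem hne
  apply le_antisymm
  · exact Nat.sInf_le ⟨_, hmem, rfl⟩
  · apply le_csInf (hne.image _)
    rintro x ⟨y, hy, rfl⟩
    exact Nat.mul_le_mul_left μ (Nat.sInf_le hy)

/-- `t` is the coset leader of its q-cyclotomic coset modulo `q^m - 1`
iff `t/μ` is the coset leader of its q-cyclotomic coset modulo `(q^m - 1)/μ`. -/
theorem stmt0 (q m t μ : ℕ) (hq : ∃ p k : ℕ, p.Prime ∧ 0 < k ∧ q = p ^ k)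
    (hm : 0 < m) (ht : 0 < t) (ht' : t < q ^ m - 1)
    (hμt : μ ∣ t) (hμn : μ ∣ q ^ m - 1) :
    cosetLeader q (q ^ m - 1) t = t ↔ cosetLeader q ((q ^ m - 1) / μ) (t / μ) = t / μ := by
  have hμpos : 0 < μ := Nat.pos_of_dvd_of_pos hμt ht
  have h1 : q ^ m - 1 = μ * ((q ^ m - 1) / μ) := (Nat.mul_div_cancel' hμn).symm
  have h2 : t = μ * (t / μ) := (Nat.mul_div_cancel' hμt).symm
  constructor
  · intro h
    have : μ * cosetLeader q ((q ^ m - 1) / μ) (t / μ) = μ * (t / μ) := by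
      rw [← cosetLeader_mul q _ _ μ hμpos, ← h1, ← h2, h]
    exact Nat.eq_of_mul_eq_mul_left hμpos this
  · intro h
    calc cosetLeader q (q ^ m - 1) t
        = μ * cosetLeader q ((q ^ m - 1) / μ) (t / μ) := by
          conv_lhs => rw [h1, h2, cosetLeader_mul q _ _ μ hμpos]
      _ = t := by rw [h, ← h2]
end

section
/- Let q ≥ 2, Q = q^2, m ≥ 3, 2 ≤ t ≤ m-1, and suppose u is an integer with 0 < u ≤ Q^{m-t}, u not of the form q·Q^l for any 0 ≤ l ≤ m-t-1. If the base-Q expansion of u(Q-1)q is a_{m-t+1}Q^{m-t+1} + ... + a_0 with a_{m-t+1} < q, then q divides a_0. Moreover the base-Q expansion of u(Q-1)q has at least two nonzero digits. -/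
/-!
Write `Q = q^2` and `N = u(Q-1)q`. A number with at most one nonzero base-`Q` digit is `a Q^k`
with `a < Q`; since `Q - 1` divides `N` and is coprime to `Q`, this forces `a = Q - 1`, so
`uq = Q^k` and `u = q Q^(k-1)`, which `u ≤ Q^(m-t)` and the excluded forms rule out.
-/

namespace Nat

lemma eq_zero_of_forall_mem_digits_eq_zero {b n : ℕ} (h : ∀ d ∈ digits b n, d = 0) : n = 0 := by
  by_contra hn
  exact getLast_digit_ne_zero b hn (h _ (List.getLast_mem _))

lemma exists_eq_mul_pow_of_countP_digits_le_one {b n : ℕ} (hb : 1 < b)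
    (h : (digits b n).countP (fun d => decide (d ≠ 0)) ≤ 1) :
    ∃ a k, a < b ∧ n = a * b ^ k := by
  induction n using Nat.strong_induction_on with
  | _ n ih =>
    rcases n.eq_zero_or_pos with rfl | hn
    · exact ⟨0, 0, by omega, by simp⟩
    rw [digits_def' hb hn, List.countP_cons] at h
    by_cases hlow : n % b = 0
    · rw [if_neg (by simpa using hlow), add_zero] at h
      obtain ⟨a, k, hab, hk⟩ := ih (n / b) (div_lt_self hn hb) h
      refine ⟨a, k + 1, hab, ?_⟩
      rw [← div_add_mod n b, hlow, hk]
      ring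
    · have hhigh : n / b = 0 := by
        have : (digits b (n / b)).countP (fun d => decide (d ≠ 0)) = 0 := by
          rw [if_pos (decide_eq_true hlow)] at h
          omega
        exact eq_zero_of_forall_mem_digits_eq_zero fun d hd => by
          simpa using List.countP_eq_zero.mp this d hd
      exact ⟨n, 0, (div_eq_zero_iff_lt (by omega)).mp hhigh, by simp⟩

lemma eq_sub_one_of_sub_one_dvd_mul_pow {a b k : ℕ} (ha : 0 < a) (hab : a < b)
    (h : b - 1 ∣ a * b ^ k) : a = b - 1 := by
  have hcop : Coprime (b - 1) (b ^ k) :=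
    ((coprime_self_sub_left (by omega)).mpr (coprime_one_left b)).pow_right k
  have := le_of_dvd ha (hcop.dvd_of_dvd_mul_right h)
  omega

end Nat

lemma eq_mul_sq_pow_of_mul_eq_sq_pow {q u k : ℕ} (hq : 2 ≤ q) (h : u * q = (q ^ 2) ^ k) :
    ∃ l, u = q * (q ^ 2) ^ l := by
  rcases k with _ | l
  · have := Nat.eq_one_of_mul_eq_one_left (by simpa using h)
    omega
  · refine ⟨l, Nat.eq_of_mul_eq_mul_right (by omega : 0 < q) ?_⟩
    rw [h]
    ring

theorem stmt5_general (q m t u : ℕ) (hq : 2 ≤ q)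
    (hu0 : 0 < u) (hu : u ≤ (q ^ 2) ^ (m - t))
    (hform : ∀ l ≤ m - t - 1, u ≠ q * (q ^ 2) ^ l) :
    q ∣ (u * (q ^ 2 - 1) * q) % (q ^ 2) ∧
      2 ≤ (Nat.digits (q ^ 2) (u * (q ^ 2 - 1) * q)).countP (fun d => decide (d ≠ 0)) := by
  have hQ : 1 < q ^ 2 := by nlinarith
  refine ⟨(Nat.dvd_mod_iff (dvd_pow_self q two_ne_zero)).mpr (dvd_mul_left q _), ?_⟩
  by_contra! hcount
  obtain ⟨a, k, haQ, hN⟩ :=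
    Nat.exists_eq_mul_pow_of_countP_digits_le_one (n := u * (q ^ 2 - 1) * q) hQ (by omega)
  have hNpos : 0 < u * (q ^ 2 - 1) * q :=
    Nat.mul_pos (Nat.mul_pos hu0 (by omega)) (by omega)
  have hdvd : q ^ 2 - 1 ∣ a * (q ^ 2) ^ k := hN ▸ Dvd.intro (u * q) (by ring)
  have ha : a = q ^ 2 - 1 := by
    refine Nat.eq_sub_one_of_sub_one_dvd_mul_pow (Nat.pos_of_ne_zero ?_) haQ hdvd
    rintro rfl
    omega
  subst ha
  obtain ⟨l, rfl⟩ : ∃ l, u = q * (q ^ 2) ^ l := by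
    refine eq_mul_sq_pow_of_mul_eq_sq_pow hq (k := k) (Nat.eq_of_mul_eq_mul_left
      (by omega : 0 < q ^ 2 - 1) ?_)
    rw [← hN]
    ring
  have hl : l < m - t := by
    refine (Nat.pow_lt_pow_iff_right hQ).mp (lt_of_lt_of_le ?_ hu)
    exact lt_mul_left (by positivity) (by omega)
  exact hform l (by omega) rfl

/-- for `u` in the given range not of the form `q·Q^l`, the least
significant base-`Q` digit of `u(Q-1)q` is divisible by `q`, and the base-`Q`
expansion of `u(Q-1)q` has at least two nonzero digits (here `Q = q^2`). -/
theorem stmt5 (q m t u : ℕ) (hq : 2 ≤ q) (hm : 3 ≤ m) (ht : 2 ≤ t) (htm : t ≤ m - 1)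
    (hu0 : 0 < u) (hu : u ≤ (q ^ 2) ^ (m - t))
    (hform : ∀ l ≤ m - t - 1, u ≠ q * (q ^ 2) ^ l)
    (hlead : u * (q ^ 2 - 1) * q < q * (q ^ 2) ^ (m - t + 1)) :
    q ∣ (u * (q ^ 2 - 1) * q) % (q ^ 2) ∧
      2 ≤ (Nat.digits (q ^ 2) (u * (q ^ 2 - 1) * q)).countP (fun d => decide (d ≠ 0)) :=
  stmt5_general q m t u hq hu0 hu hform
end
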